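/- For every real z > 0, with w = (−1 + √(1+4z))/2 the unique nonnegative solution of w(w+1) = z, the counting function of the Dirichlet Laplacian on the hemisphere S²₊ satisfies (z/2)·(1 − (ψ(w) + 1/2)·z^{−1/2})² − (1/8)·(ψ(w) + 1/2)·z^{−1/2} ≤ N^D(z) ≤ (z/2)·(1 − (ψ(w) + 1/2)·z^{−1/2})². -/
import Mathlib


/-- Counting function of the Dirichlet Laplacian eigenvalues on the hemisphere `S²₊`:
the eigenvalues are `l(l+1)` with multiplicity `l`, for integers `l ≥ 1`. -/
noncomputable def NDS2 (z : ℝ) : ℝ :=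
  ∑' l : ℕ, if 1 ≤ l ∧ (l : ℝ) * ((l : ℝ) + 1) ≤ z then (l : ℝ) else 0

/-- The fluctuation function `ψ(η) = η − ⌊η⌋ − 1/2`. -/
noncomputable def psi (η : ℝ) : ℝ := η - (⌊η⌋ : ℝ) - 1 / 2

theorem counting_fn_hemisphere_S2_bounds (z : ℝ) (hz : 0 < z) :
    (z / 2) * (1 - (psi ((-1 + Real.sqrt (1 + 4 * z)) / 2) + 1 / 2) * z ^ (-(1 : ℝ) / 2)) ^ 2 -
        (1 / 8) * (psi ((-1 + Real.sqrt (1 + 4 * z)) / 2) + 1 / 2) * z ^ (-(1 : ℝ) / 2) ≤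
      NDS2 z ∧
    NDS2 z ≤
      (z / 2) *
        (1 - (psi ((-1 + Real.sqrt (1 + 4 * z)) / 2) + 1 / 2) * z ^ (-(1 : ℝ) / 2)) ^ 2 := by
  set w : ℝ := (-1 + Real.sqrt (1 + 4 * z)) / 2 with hwdef
  have hsq : Real.sqrt (1 + 4 * z) ^ 2 = 1 + 4 * z := Real.sq_sqrt (by linarith)
  have hsqrt1 : (1 : ℝ) ≤ Real.sqrt (1 + 4 * z) := by
    nlinarith [Real.sqrt_nonneg (1 + 4 * z)]
  have hw0 : 0 ≤ w := by rw [hwdef]; linarith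
  have hw : w * (w + 1) = z := by rw [hwdef]; nlinarith
  set m : ℕ := ⌊w⌋₊ with hmdef
  have hmle : (m : ℝ) ≤ w := Nat.floor_le hw0
  have hmlt : w < (m : ℝ) + 1 := Nat.lt_floor_add_one w
  -- NDS2 z = m(m+1)/2
  have hsum : NDS2 z = (m : ℝ) * ((m : ℝ) + 1) / 2 := by
    have hvanish : ∀ l : ℕ, l ∉ Finset.range (m + 1) →
        (if 1 ≤ l ∧ (l : ℝ) * ((l : ℝ) + 1) ≤ z then (l : ℝ) else 0) = 0 := by
      intro l hl
      rw [Finset.mem_range, not_lt] at hl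
      rw [if_neg]
      rintro ⟨-, hle⟩
      have hwl : w < (l : ℝ) := lt_of_lt_of_le hmlt (by exact_mod_cast hl)
      nlinarith
    rw [NDS2, tsum_eq_sum hvanish]
    have : ∀ l ∈ Finset.range (m + 1),
        (if 1 ≤ l ∧ (l : ℝ) * ((l : ℝ) + 1) ≤ z then (l : ℝ) else 0) = (l : ℝ) := by
      intro l hl
      rw [Finset.mem_range] at hl
      rcases Nat.eq_zero_or_pos l with h0 | h1
      · subst h0; simp
      · rw [if_pos]
        refine ⟨h1, ?_⟩
        have : (l : ℝ) ≤ w := le_trans (by exact_mod_cast Nat.lt_succ_iff.mp hl) hmle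
        nlinarith
    rw [Finset.sum_congr rfl this]
    have h2 : (∑ i ∈ Finset.range (m + 1), i) * 2 = (m + 1) * m :=
      Finset.sum_range_id_mul_two (m + 1)
    have h3 : ((∑ i ∈ Finset.range (m + 1), i : ℕ) : ℝ) * 2 = ((m : ℝ) + 1) * m := by
      exact_mod_cast congrArg (Nat.cast (R := ℝ)) h2
    push_cast at h3 ⊢
    linarith
  -- the fractional part
  have hfloor : ((⌊w⌋ : ℤ) : ℝ) = (m : ℝ) := by
    have : ⌊w⌋.toNat = m := Int.floor_toNat w
    rw [← this]
    exact_mod_cast (Int.toNat_of_nonneg (Int.floor_nonneg.mpr hw0)).symm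
  have hpsi : psi w + 1 / 2 = w - (m : ℝ) := by rw [psi, hfloor]; ring
  set f : ℝ := w - (m : ℝ) with hfdef
  have hf0 : 0 ≤ f := by linarith
  have hf1 : f < 1 := by linarith
  -- s = sqrt z
  set s : ℝ := Real.sqrt z with hsdef
  have hs2 : s ^ 2 = z := Real.sq_sqrt hz.le
  have hs0 : 0 < s := Real.sqrt_pos.mpr hz
  have hrpow : z ^ (-(1 : ℝ) / 2) = s⁻¹ := by
    rw [show (-(1 : ℝ) / 2) = -(1 / 2 : ℝ) by norm_num, Real.rpow_neg hz.le,
      show ((1 : ℝ) / 2) = (1 / 2 : ℝ) from rfl, ← Real.sqrt_eq_rpow]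
  have hsle : 2 * s ≤ 2 * w + 1 := by nlinarith
  have hm : (m : ℝ) = w - f := by rw [hfdef]; ring
  -- rewrite goal
  rw [hsum, hpsi, hrpow]
  have hsi : s * s⁻¹ = 1 := mul_inv_cancel₀ hs0.ne'
  have hrhs : (z / 2) * (1 - f * s⁻¹) ^ 2 = (s - f) ^ 2 / 2 := by
    have h1 : (1 : ℝ) - f * s⁻¹ = (s - f) * s⁻¹ := by
      field_simp
    rw [h1, mul_pow, ← hs2]
    field_simp
  rw [hrhs, hm]
  clear_value w s f
  clear hwdef hsdef hfdef hmdef hsq hsqrt1 hsum hfloor hpsi hmle hmlt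
  constructor
  · -- lower bound
    have hid : (2 * w + 1 - 2 * s) * (2 * w + 1 + 2 * s) = 1 := by linear_combination 4 * hw - 4 * hs2
    have hd : 0 ≤ 2 * w + 1 - 2 * s := by linarith
    have h4 : (2 * w + 1 - 2 * s) * (4 * s) ≤ 1 := by nlinarith
    have hk2 : f * ((2 * w + 1 - 2 * s) * (4 * s)) ≤ f := by nlinarith
    have hrepr : f * (2 * w + 1 - 2 * s) = (1 / 4) * s⁻¹ * (f * ((2 * w + 1 - 2 * s) * (4 * s))) := by
      field_simp
    have hfin : f * (2 * w + 1 - 2 * s) ≤ (1 / 4) * s⁻¹ * f := by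
      rw [hrepr]
      exact mul_le_mul_of_nonneg_left hk2 (by positivity)
    nlinarith [hfin]
  · -- upper bound
    have hkey : 0 ≤ f * (2 * w + 1 - 2 * s) := mul_nonneg hf0 (by linarith)
    nlinarith [hkey]
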